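/- arXiv:2006.11116 — 3 statements merged into one kernel-verified Lean document; each statement's English description precedes it below -/
import Mathlib

section
/- In the AFW algorithm (y_k = (1−δ_k)x_k + δ_k v_k; θ_{k+1} = (1−δ_k)θ_k + δ_k ∇f(y_k); v_{k+1} ∈ argmin_{x∈X}⟨θ_{k+1},x⟩; x_{k+1} = (1−δ_k)x_k + δ_k v_{k+1}), with Φ_k* = min_{x∈X}Φ_k(x) for the linear surrogates Φ_k, it holds for all k that f(x_k) ≤ Φ_k* + ξ_k, where ξ₀ = 0 and ξ_{k+1} = (1−δ_k)ξ_k + (Lδ_k²/2)‖v_{k+1} − v_k‖². -/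
open scoped RealInnerProductSpace

variable {d : ℕ}

private lemma line_hasDerivAt (f : EuclideanSpace ℝ (Fin d) → ℝ)
    (g : EuclideanSpace ℝ (Fin d) → EuclideanSpace ℝ (Fin d))
    (hgrad : ∀ x, HasGradientAt f (g x) x) (a b : EuclideanSpace ℝ (Fin d)) (t : ℝ) :
    HasDerivAt (fun s : ℝ => f (s • (b - a) + a)) ⟪g (t • (b - a) + a), b - a⟫ t := by
  have hγ : HasDerivAt (fun s : ℝ => s • (b - a) + a) (b - a) t := by
    simpa using ((hasDerivAt_id t).smul_const (b - a)).add_const a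
  have hf := (hasGradientAt_iff_hasFDerivAt.mp (hgrad (t • (b - a) + a)))
  have := hf.comp_hasDerivAt t hγ
  exact this

private lemma grad_ineq (f : EuclideanSpace ℝ (Fin d) → ℝ)
    (g : EuclideanSpace ℝ (Fin d) → EuclideanSpace ℝ (Fin d))
    (hgrad : ∀ x, HasGradientAt f (g x) x)
    (hconv : ConvexOn ℝ Set.univ f) (a b : EuclideanSpace ℝ (Fin d)) :
    f a + ⟪g a, b - a⟫ ≤ f b := by
  set φ : ℝ → ℝ := fun s => f (s • (b - a) + a) with hφdef
  have hφc : ConvexOn ℝ Set.univ φ := by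
    have h := hconv.comp_affineMap (AffineMap.lineMap a b)
    have he : φ = f ∘ (AffineMap.lineMap a b) := by
      funext s
      simp [hφdef, AffineMap.lineMap_apply_module]
      congr 1
      module
    rw [he]
    simpa using h
  have hd : HasDerivAt φ ⟪g a, b - a⟫ 0 := by
    simpa using line_hasDerivAt f g hgrad a b 0
  have ht : Filter.Tendsto (slope φ 0) (nhdsWithin 0 {(0:ℝ)}ᶜ) (nhds ⟪g a, b - a⟫) :=
    hasDerivAt_iff_tendsto_slope.mp hd
  have ht' : Filter.Tendsto (slope φ 0) (nhdsWithin 0 (Set.Ioi 0)) (nhds ⟪g a, b - a⟫) :=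
    ht.mono_left (nhdsWithin_mono _ (fun x hx => ne_of_gt hx))
  have hev : ∀ᶠ s in nhdsWithin (0:ℝ) (Set.Ioi 0), slope φ 0 s ≤ φ 1 - φ 0 := by
    filter_upwards [Ioc_mem_nhdsGT_of_mem (Set.mem_Ico.mpr ⟨le_refl (0:ℝ), one_pos⟩)] with s hs
    have := hφc.secant_mono (Set.mem_univ (0:ℝ)) (Set.mem_univ s) (Set.mem_univ 1)
      (ne_of_gt hs.1) one_ne_zero hs.2
    simpa [slope, div_eq_inv_mul] using this
  have hle : ⟪g a, b - a⟫ ≤ φ 1 - φ 0 :=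
    le_of_tendsto ht' hev
  have h1 : φ 1 = f b := by simp [hφdef]
  have h0 : φ 0 = f a := by simp [hφdef]
  rw [h1, h0] at hle; linarith

private lemma descent (f : EuclideanSpace ℝ (Fin d) → ℝ)
    (g : EuclideanSpace ℝ (Fin d) → EuclideanSpace ℝ (Fin d)) (L : ℝ) (hL : 0 < L)
    (hgrad : ∀ x, HasGradientAt f (g x) x)
    (hlip : ∀ x y, ‖g x - g y‖ ≤ L * ‖x - y‖) (a b : EuclideanSpace ℝ (Fin d)) :
    f b ≤ f a + ⟪g a, b - a⟫ + L / 2 * ‖b - a‖ ^ 2 := by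
  set u := b - a with hu
  set c : ℝ := ⟪g a, u⟫ with hc
  set ψ : ℝ → ℝ := fun s => f (s • u + a) - s * c - L * ‖u‖ ^ 2 / 2 * s ^ 2 with hψ
  have hder : ∀ t : ℝ, HasDerivAt ψ (⟪g (t • u + a), u⟫ - c - L * ‖u‖ ^ 2 * t) t := by
    intro t
    have h1 := line_hasDerivAt f g hgrad a b t
    have h2 : HasDerivAt (fun s : ℝ => s * c) c t := by simpa using (hasDerivAt_id t).mul_const c
    have h3 : HasDerivAt (fun s : ℝ => L * ‖u‖ ^ 2 / 2 * s ^ 2) (L * ‖u‖ ^ 2 * t) t := by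
      have := (hasDerivAt_pow 2 t).const_mul (L * ‖u‖ ^ 2 / 2)
      rw [show (L * ‖u‖ ^ 2 / 2 * (((2:ℕ):ℝ) * t ^ (2 - 1)) : ℝ) = L * ‖u‖ ^ 2 * t by
        simp only [Nat.cast_ofNat, Nat.reduceSub, pow_one]; ring] at this
      exact this
    have h4 := (h1.sub h2).sub h3
    simp only [hψ, hu]
    exact h4
  have hanti : AntitoneOn ψ (Set.Ici (0:ℝ)) := by
    apply antitoneOn_of_deriv_nonpos (convex_Ici 0)
    · exact fun t _ => ((hder t).continuousAt).continuousWithinAt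
    · intro t ht
      exact ((hder t).differentiableAt).differentiableWithinAt
    · intro t ht
      rw [interior_Ici] at ht
      rw [(hder t).deriv]
      have hip : ⟪g (t • u + a) - g a, u⟫ ≤ L * t * ‖u‖ ^ 2 := by
        calc ⟪g (t • u + a) - g a, u⟫ ≤ ‖g (t • u + a) - g a‖ * ‖u‖ :=
              real_inner_le_norm _ _
          _ ≤ (L * ‖(t • u + a) - a‖) * ‖u‖ := by
              have := hlip (t • u + a) a
              exact mul_le_mul_of_nonneg_right this (norm_nonneg u)
          _ = L * t * ‖u‖ ^ 2 := by
              have : (t • u + a) - a = t • u := by abel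
              rw [this, norm_smul]
              rw [Real.norm_eq_abs, abs_of_pos ht]; ring
      have : ⟪g (t • u + a), u⟫ - c = ⟪g (t • u + a) - g a, u⟫ := by
        rw [inner_sub_left]
      rw [this]; linarith
  have key := hanti (Set.mem_Ici.mpr le_rfl) (Set.mem_Ici.mpr zero_le_one) zero_le_one
  have h1 : ψ 1 = f b - c - L * ‖u‖ ^ 2 / 2 := by simp [hψ, hu]
  have h0 : ψ 0 = f a := by simp [hψ]
  rw [h1, h0] at key
  have : L / 2 * ‖u‖ ^ 2 = L * ‖u‖ ^ 2 / 2 := by ring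
  rw [hu] at *
  linarith [key]

theorem stmt7 {d : ℕ} (f : EuclideanSpace ℝ (Fin d) → ℝ)
    (g : EuclideanSpace ℝ (Fin d) → EuclideanSpace ℝ (Fin d)) (L : ℝ) (hL : 0 < L)
    (hgrad : ∀ x, HasGradientAt f (g x) x)
    (hconv : ConvexOn ℝ Set.univ f)
    (hlip : ∀ x y, ‖g x - g y‖ ≤ L * ‖x - y‖)
    (X : Set (EuclideanSpace ℝ (Fin d))) (hXc : IsCompact X) (hX : Convex ℝ X)
    (δ : ℕ → ℝ) (hδ : ∀ k, δ k ∈ Set.Ioo (0 : ℝ) 1)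
    (x y v θ : ℕ → EuclideanSpace ℝ (Fin d))
    (Φ : ℕ → EuclideanSpace ℝ (Fin d) → ℝ) (ξ : ℕ → ℝ)
    (hx0 : x 0 ∈ X) (hv0 : v 0 = x 0) (hθ0 : θ 0 = 0)
    (hy : ∀ k, y k = (1 - δ k) • x k + δ k • v k)
    (hθ : ∀ k, θ (k + 1) = (1 - δ k) • θ k + δ k • g (y k))
    (hvmem : ∀ k, v (k + 1) ∈ X)
    (hvmin : ∀ k, ∀ z ∈ X, ⟪θ (k + 1), v (k + 1)⟫ ≤ ⟪θ (k + 1), z⟫)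
    (hx : ∀ k, x (k + 1) = (1 - δ k) • x k + δ k • v (k + 1))
    (hΦ0 : ∀ z, Φ 0 z = f (x 0))
    (hΦ : ∀ k z, Φ (k + 1) z =
      (1 - δ k) * Φ k z + δ k * (f (y k) + ⟪g (y k), z - y k⟫))
    (hξ0 : ξ 0 = 0)
    (hξ : ∀ k, ξ (k + 1) = (1 - δ k) * ξ k + (L * (δ k) ^ 2 / 2) * ‖v (k + 1) - v k‖ ^ 2) :
    ∀ k : ℕ, (∀ z ∈ X, Φ k (v k) ≤ Φ k z) ∧ f (x k) ≤ Φ k (v k) + ξ k := by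
  -- Φ k is affine with gradient θ k
  have hΦdiff : ∀ k z w, Φ k z - Φ k w = ⟪θ k, z - w⟫ := by
    intro k
    induction k with
    | zero => intro z w; simp [hΦ0, hθ0]
    | succ k ih =>
      intro z w
      rw [hΦ k z, hΦ k w, hθ k, inner_add_left, real_inner_smul_left, real_inner_smul_left]
      have h1 := ih z w
      have h2 : ⟪g (y k), z - y k⟫ - ⟪g (y k), w - y k⟫ = ⟪g (y k), z - w⟫ := by
        rw [← inner_sub_right]
        congr 1
        abel
      linear_combination (1 - δ k) * h1 + δ k * h2
  -- membership of x k and v k in X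
  have hxmem : ∀ k, x k ∈ X := by
    intro k
    induction k with
    | zero => exact hx0
    | succ k ih =>
      rw [hx k]
      have hδk := hδ k
      exact hX ih (hvmem k) (by linarith [hδk.2]) (le_of_lt hδk.1) (by ring)
  have hvmem' : ∀ k, v k ∈ X := by
    intro k
    cases k with
    | zero => rw [hv0]; exact hx0
    | succ k => exact hvmem k
  intro k
  induction k with
  | zero =>
    constructor
    · intro z hz; rw [hΦ0, hΦ0]
    · rw [hΦ0, hξ0]; simp
  | succ k ih =>
    obtain ⟨iha, ihb⟩ := ih
    have hδk := hδ k
    have hδ0 : (0:ℝ) < δ k := hδk.1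
    have hδ1 : δ k < 1 := hδk.2
    constructor
    · intro z hz
      have := hvmin k z hz
      have hd := hΦdiff (k+1) (v (k+1)) z
      rw [inner_sub_right] at hd
      linarith
    · -- descent lemma at y k, x (k+1)
      have hdesc := descent f g L hL hgrad hlip (y k) (x (k+1))
      have hgi := grad_ineq f g hgrad hconv (y k) (x k)
      -- x (k+1) - y k = δ k • (v (k+1) - v k)
      have hdiff : x (k+1) - y k = δ k • (v (k+1) - v k) := by
        rw [hx k, hy k]; module
      have hnorm : ‖x (k+1) - y k‖ ^ 2 = δ k ^ 2 * ‖v (k+1) - v k‖ ^ 2 := by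
        rw [hdiff, norm_smul, Real.norm_eq_abs, abs_of_pos hδ0, mul_pow]
      -- inner product decomposition
      have hdiff2 : x (k+1) - y k = (1 - δ k) • (x k - y k) + δ k • (v (k+1) - y k) := by
        rw [hx k, hy k]; module
      have hinner : ⟪g (y k), x (k+1) - y k⟫ =
          (1 - δ k) * ⟪g (y k), x k - y k⟫ + δ k * ⟪g (y k), v (k+1) - y k⟫ := by
        rw [hdiff2, inner_add_right, real_inner_smul_right, real_inner_smul_right]
      have hΦnew : Φ (k+1) (v (k+1)) =
          (1 - δ k) * Φ k (v (k+1)) + δ k * (f (y k) + ⟪g (y k), v (k+1) - y k⟫) :=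
        hΦ k (v (k+1))
      have hmin : Φ k (v k) ≤ Φ k (v (k+1)) := iha (v (k+1)) (hvmem k)
      have hξnew := hξ k
      rw [hnorm, hinner] at hdesc
      rw [hΦnew, hξnew]
      nlinarith [mul_le_mul_of_nonneg_left hgi (le_of_lt (by linarith : (0:ℝ) < 1 - δ k)),
        mul_le_mul_of_nonneg_left ihb (le_of_lt (by linarith : (0:ℝ) < 1 - δ k)),
        mul_le_mul_of_nonneg_left hmin (le_of_lt (by linarith : (0:ℝ) < 1 - δ k))]
end

section
/- Consider AGM for convex f with L-Lipschitz gradient: y_k = δ_k v_k + (1−δ_k)x_k, x_{k+1} = y_k − (1/L)∇f(y_k), v_{k+1} = v_k − (δ_k/μ_{k+1})∇f(y_k), with δ_k = 2/(k+3), μ₀ = 2L, μ_{k+1} = (1−δ_k)μ_k, v₀ = x₀. Suppose f(x_k) ≤ Φ_k* := min_x Φ_k(x) where Φ_k(x) = Φ_k* + (μ_k/2)‖x − v_k‖² and the Φ_k form an estimate sequence with λ_k = 2/((k+1)(k+2)) and Φ₀(x) = f(x₀) + L‖x − x₀‖². Then for all k, ‖v_k − x*‖² ≤ (1/L)(f(x₀)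 − f(x*) + L‖x₀ − x*‖²). -/
open scoped RealInnerProductSpace

theorem stmt18 {d : ℕ} (f : EuclideanSpace ℝ (Fin d) → ℝ)
    (g : EuclideanSpace ℝ (Fin d) → EuclideanSpace ℝ (Fin d)) (L : ℝ) (hL : 0 < L)
    (hgrad : ∀ z, HasGradientAt f (g z) z)
    (hconv : ConvexOn ℝ Set.univ f)
    (hlip : ∀ z w, ‖g z - g w‖ ≤ L * ‖z - w‖)
    (xstar : EuclideanSpace ℝ (Fin d)) (hmin : ∀ z, f xstar ≤ f z)
    (x y v : ℕ → EuclideanSpace ℝ (Fin d)) (μ lam : ℕ → ℝ)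
    (Φ : ℕ → EuclideanSpace ℝ (Fin d) → ℝ) (Φstar : ℕ → ℝ)
    (hμ0 : μ 0 = 2 * L)
    (hμ : ∀ k : ℕ, μ (k + 1) = (1 - 2 / ((k : ℝ) + 3)) * μ k)
    (hy : ∀ k : ℕ, y k = (2 / ((k : ℝ) + 3)) • v k + (1 - 2 / ((k : ℝ) + 3)) • x k)
    (hx : ∀ k : ℕ, x (k + 1) = y k - (1 / L) • g (y k))
    (hv : ∀ k : ℕ, v (k + 1) = v k - ((2 / ((k : ℝ) + 3)) / μ (k + 1)) • g (y k))
    (hv0 : v 0 = x 0)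
    (hfx : ∀ k, f (x k) ≤ Φstar k)
    (hΦ : ∀ k z, Φ k z = Φstar k + (μ k / 2) * ‖z - v k‖ ^ 2)
    (hlam : ∀ k : ℕ, lam k = 2 / (((k : ℝ) + 1) * ((k : ℝ) + 2)))
    (hes : ∀ k z, Φ k z ≤ (1 - lam k) * f z + lam k * Φ 0 z)
    (hΦ0 : ∀ z, Φ 0 z = f (x 0) + L * ‖z - x 0‖ ^ 2) :
    ∀ k : ℕ, ‖v k - xstar‖ ^ 2 ≤
      (1 / L) * (f (x 0) - f xstar + L * ‖x 0 - xstar‖ ^ 2) := by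
  intro k
  have hlampos : ∀ n : ℕ, 0 < lam n := by
    intro n; rw [hlam n]; positivity
  have hmu : ∀ n : ℕ, μ n = 2 * L * lam n := by
    intro n
    induction n with
    | zero => rw [hμ0, hlam 0]; ring
    | succ k ih =>
      rw [hμ k, ih, hlam k, hlam (k+1)]
      push_cast
      have h1 : (k : ℝ) + 3 ≠ 0 := by positivity
      have h2 : (k : ℝ) + 1 ≠ 0 := by positivity
      have h3 : (k : ℝ) + 2 ≠ 0 := by positivity
      field_simp
      ring
  have hes' := hes k xstar
  rw [hΦ k xstar, hΦ0 xstar] at hes'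
  have hfs : f xstar ≤ Φstar k := le_trans (hmin (x k)) (hfx k)
  have hnorm1 : ‖xstar - v k‖ = ‖v k - xstar‖ := norm_sub_rev _ _
  have hnorm2 : ‖xstar - x 0‖ = ‖x 0 - xstar‖ := norm_sub_rev _ _
  rw [hnorm1, hnorm2, hmu k] at hes'
  have hlk := hlampos k
  have : L * ‖v k - xstar‖ ^ 2 ≤ f (x 0) - f xstar + L * ‖x 0 - xstar‖ ^ 2 := by
    nlinarith [hes', hfs, hlk]
  have h1L : 1 / L * L = 1 := by field_simp
  have h2 := mul_le_mul_of_nonneg_left this (by positivity : (0:ℝ) ≤ 1 / L)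
  rw [← mul_assoc, h1L, one_mul] at h2
  linarith
end

section
/- Consider AGM with δ_k = 2/(k+3) and μ_{k+1}/δ_k = 2L/(k+2), so that v_{k+1} = v_k − ((k+2)/(2L))∇f(y_k), v₀ = x₀. Define d_k = f(y_k) + ⟨∇f(y_k), v_{k+1} − y_k⟩ − f(x*). Then with weights w_k^{(τ)} = 2(τ+2)/(k(k+3)) for τ = 0,...,k−1 (which sum to 1), it holds that Σ_{τ=0}^{k−1} w_k^{(τ)} d_τ ≤ 2L‖x₀ − x*‖²/(k(k+3)). -/
open scoped RealInnerProductSpace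

lemma grad_convex_le {d : ℕ} (f : EuclideanSpace ℝ (Fin d) → ℝ)
    (g : EuclideanSpace ℝ (Fin d) → EuclideanSpace ℝ (Fin d))
    (hgrad : ∀ z, HasGradientAt f (g z) z)
    (hconv : ConvexOn ℝ Set.univ f)
    (x z : EuclideanSpace ℝ (Fin d)) : f x + ⟪g x, z - x⟫ ≤ f z := by
  set u := z - x with hu
  have hline : HasDerivAt (fun t : ℝ => f (x + t • u)) ⟪g x, u⟫ 0 := by
    have h1 : HasDerivAt (fun t : ℝ => x + t • u) u 0 := by
      simpa using ((hasDerivAt_id (0:ℝ)).smul_const u).const_add x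
    have hg' : HasFDerivAt f ((InnerProductSpace.toDual ℝ _) (g x)) (x + (0:ℝ) • u) := by
      simpa using (hgrad x).hasFDerivAt
    have h2 := hg'.comp_hasDerivAt 0 h1
    exact h2
  have hslope : ∀ t ∈ Set.Ioo (0:ℝ) 1,
      slope (fun t : ℝ => f (x + t • u)) 0 t ≤ f z - f x := by
    intro t ht
    have hx : x + t • u = (1 - t) • x + t • z := by
      rw [hu]; module
    have hc := hconv.2 (Set.mem_univ x) (Set.mem_univ z)
      (by linarith [ht.2] : (0:ℝ) ≤ 1 - t) (le_of_lt ht.1) (by ring)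
    simp only [smul_eq_mul] at hc
    rw [slope_def_field]
    simp only [zero_smul, add_zero, sub_zero]
    rw [div_le_iff₀ ht.1, hx]
    calc f ((1-t) • x + t • z) - f x ≤ (1-t) * f x + t * f z - f x := by linarith [hc]
      _ = (f z - f x) * t := by ring
  have htend : Filter.Tendsto (slope (fun t : ℝ => f (x + t • u)) 0)
      (nhdsWithin 0 (Set.Ioi 0)) (nhds ⟪g x, u⟫) :=
    (hasDerivAt_iff_tendsto_slope.mp hline).mono_left
      (nhdsWithin_mono 0 (fun t ht => ne_of_gt ht))
  have := le_of_tendsto htend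
    (Filter.eventually_of_mem (Ioo_mem_nhdsGT_of_mem (by norm_num : (0:ℝ) ∈ Set.Ico 0 1)) hslope)
  linarith [this]

theorem stmt19 {d : ℕ} (f : EuclideanSpace ℝ (Fin d) → ℝ)
    (g : EuclideanSpace ℝ (Fin d) → EuclideanSpace ℝ (Fin d)) (L : ℝ) (hL : 0 < L)
    (hgrad : ∀ z, HasGradientAt f (g z) z)
    (hconv : ConvexOn ℝ Set.univ f)
    (hlip : ∀ z w, ‖g z - g w‖ ≤ L * ‖z - w‖)
    (xstar : EuclideanSpace ℝ (Fin d)) (hmin : ∀ z, f xstar ≤ f z)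
    (x0 : EuclideanSpace ℝ (Fin d)) (y v : ℕ → EuclideanSpace ℝ (Fin d))
    (hv0 : v 0 = x0)
    (hv : ∀ k : ℕ, v (k + 1) = v k - (((k : ℝ) + 2) / (2 * L)) • g (y k)) :
    ∀ k : ℕ, 1 ≤ k →
      (∑ τ ∈ Finset.range k, 2 * ((τ : ℝ) + 2) / ((k : ℝ) * ((k : ℝ) + 3)) = 1) ∧
      ∑ τ ∈ Finset.range k,
          (2 * ((τ : ℝ) + 2) / ((k : ℝ) * ((k : ℝ) + 3))) *
            (f (y τ) + ⟪g (y τ), v (τ + 1) - y τ⟫ - f xstar) ≤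
        2 * L * ‖x0 - xstar‖ ^ 2 / ((k : ℝ) * ((k : ℝ) + 3)) := by
  set a : ℕ → ℝ := fun τ => ‖v τ - xstar‖ ^ 2 with ha
  have key : ∀ τ : ℕ, ((τ:ℝ)+2) * (f (y τ) + ⟪g (y τ), v (τ+1) - y τ⟫ - f xstar)
      ≤ L * (a τ - a (τ+1)) := by
    intro τ
    have hc : f (y τ) + ⟪g (y τ), xstar - y τ⟫ ≤ f xstar :=
      grad_convex_le f g hgrad hconv (y τ) xstar
    have hsplit : ⟪g (y τ), v (τ+1) - y τ⟫ =
        ⟪g (y τ), xstar - y τ⟫ + ⟪g (y τ), v (τ+1) - xstar⟫ := by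
      rw [← inner_add_right]
      congr 1
      abel
    have hd : f (y τ) + ⟪g (y τ), v (τ+1) - y τ⟫ - f xstar
        ≤ ⟪g (y τ), v (τ+1) - xstar⟫ := by
      rw [hsplit]; linarith
    have hgv : v τ - v (τ+1) = (((τ:ℝ)+2)/(2*L)) • g (y τ) := by
      rw [hv τ]; abel
    have h2 : ((τ:ℝ)+2) • g (y τ) = (2*L) • (v τ - v (τ+1)) := by
      rw [hgv, smul_smul]
      congr 1
      field_simp
    have h3 : ((τ:ℝ)+2) * ⟪g (y τ), v (τ+1) - xstar⟫
        = 2*L * ⟪v τ - v (τ+1), v (τ+1) - xstar⟫ := by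
      rw [← real_inner_smul_left, h2, real_inner_smul_left]
    have h4 : a τ = ‖(v τ - v (τ+1)) + (v (τ+1) - xstar)‖ ^ 2 := by
      rw [ha]; simp only; rw [sub_add_sub_cancel]
    rw [norm_add_sq_real] at h4
    have h5 : ((τ:ℝ)+2) * (f (y τ) + ⟪g (y τ), v (τ+1) - y τ⟫ - f xstar)
        ≤ ((τ:ℝ)+2) * ⟪g (y τ), v (τ+1) - xstar⟫ :=
      mul_le_mul_of_nonneg_left hd (by positivity)
    have hnn : (0:ℝ) ≤ ‖v τ - v (τ+1)‖ ^ 2 := by positivity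
    have ha1 : a (τ+1) = ‖v (τ+1) - xstar‖ ^ 2 := rfl
    nlinarith [h5, h3, h4, hnn, hL, mul_nonneg hL.le hnn, ha1]
  have hsum : ∀ n : ℕ, ∑ τ ∈ Finset.range n, (2*((τ:ℝ)+2)) = (n:ℝ)*((n:ℝ)+3) := by
    intro n
    induction n with
    | zero => simp
    | succ m ih => rw [Finset.sum_range_succ, ih]; push_cast; ring
  intro k hk
  have hk1 : (1:ℝ) ≤ (k:ℝ) := by exact_mod_cast hk
  have hK : (0:ℝ) < (k:ℝ) * ((k:ℝ)+3) := by nlinarith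
  constructor
  · rw [← Finset.sum_div, hsum k, div_self (ne_of_gt hK)]
  · have step : ∀ τ ∈ Finset.range k,
        (2 * ((τ : ℝ) + 2) / ((k : ℝ) * ((k : ℝ) + 3))) *
            (f (y τ) + ⟪g (y τ), v (τ + 1) - y τ⟫ - f xstar)
        ≤ (2 / ((k:ℝ)*((k:ℝ)+3))) * (L * (a τ - a (τ+1))) := by
      intro τ _
      have := mul_le_mul_of_nonneg_left (key τ) (le_of_lt (by positivity : (0:ℝ) < 2 / ((k:ℝ)*((k:ℝ)+3))))
      calc (2 * ((τ : ℝ) + 2) / ((k : ℝ) * ((k : ℝ) + 3))) *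
            (f (y τ) + ⟪g (y τ), v (τ + 1) - y τ⟫ - f xstar)
          = (2 / ((k:ℝ)*((k:ℝ)+3))) * (((τ:ℝ)+2) * (f (y τ) + ⟪g (y τ), v (τ + 1) - y τ⟫ - f xstar)) := by ring
        _ ≤ _ := this
    calc ∑ τ ∈ Finset.range k,
          (2 * ((τ : ℝ) + 2) / ((k : ℝ) * ((k : ℝ) + 3))) *
            (f (y τ) + ⟪g (y τ), v (τ + 1) - y τ⟫ - f xstar)
        ≤ ∑ τ ∈ Finset.range k, (2 / ((k:ℝ)*((k:ℝ)+3))) * (L * (a τ - a (τ+1))) :=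
          Finset.sum_le_sum step
      _ = (2 / ((k:ℝ)*((k:ℝ)+3))) * (L * (a 0 - a k)) := by
          rw [← Finset.mul_sum]
          congr 1
          rw [← Finset.mul_sum, Finset.sum_range_sub' a k]
      _ ≤ (2 / ((k:ℝ)*((k:ℝ)+3))) * (L * (a 0)) := by
          have hak : 0 ≤ a k := by positivity
          have h2K : (0:ℝ) < 2 / ((k:ℝ)*((k:ℝ)+3)) := by positivity
          exact mul_le_mul_of_nonneg_left
            (mul_le_mul_of_nonneg_left (by linarith) hL.le) h2K.le
      _ = 2 * L * ‖x0 - xstar‖ ^ 2 / ((k : ℝ) * ((k : ℝ) + 3)) := by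
          rw [ha]; simp only; rw [hv0]; ring
end
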